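/- Let V₁, V₂: ℝ → [0,∞) be Orlicz functions with V₁(x)/V₂(x) → ∞ as |x| → ∞, and let M ∈ (0,∞). Then the set K_{V₁}^M := { ν a Borel probability measure on ℝ : m_{V₁}(ν) ≤ M } is sequentially compact in the following sense: every sequence (μ_n) in K_{V₁}^M has a subsequence (μ_{n_k}) and a limit μ ∈ K_{V₁}^M such that μ_{n_k} → μ weakly and m_{V₂}(μ_{n_k}) → m_{V₂}(μ); equivalently, K_{V₁}^M is compact with respect to the metric d_{V₂}(μ,ν) := d_w(μ,ν) + |m_{V₂}(μ) − m_{V₂}(ν)|, where d_w is any metric inducing weak convergence (e.g., the Lévy–Prokhorov metric). -/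

import Mathlib

open MeasureTheory Real Filter Topology ENNReal

noncomputable section

def IsOrlicz (V : ℝ → ℝ) : Prop :=
  ConvexOn ℝ Set.univ V ∧ (∀ x, V (-x) = V x) ∧ V 0 = 0 ∧ (∀ x, x ≠ 0 → 0 < V x) ∧
    (∀ x, 0 ≤ V x)

def mV (V : ℝ → ℝ) (μ : Measure ℝ) : ℝ≥0∞ := ∫⁻ x, ENNReal.ofReal (V x) ∂μ

/-!
Since `V₁` grows at least linearly, Markov's inequality turns the bound `m_{V₁} ≤ M` into
uniform tail bounds, so the sequence is tight and Prokhorov's theorem extracts a weakly convergent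
subsequence. The moment `m_{V₁}` is lower semicontinuous for weak convergence, so the limit keeps
`m_{V₁} ≤ M`. Finally `V₂ ≤ c V₁ + C_c` for every `c > 0`: truncating `V₂` at height `C_c` gives a
bounded continuous function, whose integrals converge, and changes every `m_{V₂}` by at most `c M`.
-/

namespace IsOrlicz

variable {V : ℝ → ℝ}

theorem continuous (hV : IsOrlicz V) : Continuous V :=
  continuousOn_univ.mp (hV.1.continuousOn isOpen_univ)

theorem nonneg (hV : IsOrlicz V) (x : ℝ) : 0 ≤ V x := hV.2.2.2.2 x

theorem mul_map_one_le (hV : IsOrlicz V) {t : ℝ} (ht : 1 ≤ t) : t * V 1 ≤ V t := by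
  have ht0 : 0 < t := one_pos.trans_le ht
  have h := hV.1.2 (Set.mem_univ t) (Set.mem_univ 0) (inv_nonneg.2 ht0.le)
    (sub_nonneg.2 (inv_le_one_of_one_le₀ ht)) (add_sub_cancel _ _)
  simp only [smul_eq_mul, mul_zero, add_zero, hV.2.2.1, inv_mul_cancel₀ ht0.ne'] at h
  rwa [← le_div_iff₀' ht0, div_eq_inv_mul]

theorem map_one_mul_abs_sub_one_le (hV : IsOrlicz V) (x : ℝ) : V 1 * (|x| - 1) ≤ V x := by
  have hsymm : V |x| = V x := by
    rcases abs_choice x with h | h <;> simp only [h, hV.2.1]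
  rw [← hsymm]
  rcases le_or_gt 1 |x| with hx | hx
  · linarith [hV.mul_map_one_le hx, hV.nonneg 1]
  · exact (mul_nonpos_of_nonneg_of_nonpos (hV.nonneg 1) (by linarith)).trans (hV.nonneg _)

theorem tendsto_cocompact_atTop (hV : IsOrlicz V) : Tendsto V (cocompact ℝ) atTop := by
  refine tendsto_atTop_mono hV.map_one_mul_abs_sub_one_le ?_
  exact (tendsto_atTop_add_const_right _ _ tendsto_norm_cocompact_atTop).const_mul_atTop
    (hV.2.2.2.1 1 one_ne_zero)

end IsOrlicz

theorem exists_le_mul_add_of_tendsto_div {X : Type*} [TopologicalSpace X] {f g : X → ℝ}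
    (hf : Continuous f) (hf0 : 0 ≤ f) (hg0 : 0 ≤ g)
    (hfg : Tendsto (fun x => g x / f x) (cocompact X) atTop) {c : ℝ} (hc : 0 < c) :
    ∃ C, ∀ x, f x ≤ c * g x + C := by
  obtain ⟨K, hK, hKc⟩ := mem_cocompact.1 (hfg.eventually_ge_atTop c⁻¹)
  obtain ⟨C, hC⟩ := hK.bddAbove_image hf.continuousOn
  refine ⟨max C 0, fun x => ?_⟩
  have hcg : 0 ≤ c * g x := mul_nonneg hc.le (hg0 x)
  by_cases hxK : x ∈ K
  · linarith [hC ⟨x, hxK, rfl⟩, le_max_left C 0]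
  · have hx : c⁻¹ ≤ g x / f x := hKc hxK
    suffices f x ≤ c * g x by linarith [le_max_right C 0]
    rcases (hf0 x).eq_or_lt with h0 | hpos
    · rw [← h0]; exact hcg
    · rw [le_div_iff₀ hpos, inv_mul_le_iff₀ hc] at hx
      exact hx

theorem isTightMeasureSet_of_lintegral_le {X : Type*} [TopologicalSpace X] [MeasurableSpace X]
    {S : Set (Measure X)} {v : X → ℝ≥0∞} (hv : Measurable v)
    (hv_tendsto : Tendsto v (cocompact X) (𝓝 ∞)) {B : ℝ≥0∞} (hB : B ≠ ∞)
    (hS : ∀ μ ∈ S, ∫⁻ x, v x ∂μ ≤ B) : IsTightMeasureSet S := by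
  rw [isTightMeasureSet_iff_exists_isCompact_measure_compl_le]
  intro ε hε
  obtain ⟨n, hn, hBn⟩ := ((eventually_ne_atTop 0).and
    ((ENNReal.Tendsto.const_mul ENNReal.tendsto_inv_nat_nhds_zero (Or.inr hB)).eventually
      (eventually_le_nhds (by rwa [mul_zero])))).exists
  obtain ⟨K, hK, hKv⟩ := mem_cocompact.1 (hv_tendsto.eventually (lt_mem_nhds (natCast_lt_top n)))
  refine ⟨K, hK, fun μ hμ => ?_⟩
  calc μ Kᶜ ≤ μ {x | (n : ℝ≥0∞) ≤ v x} := measure_mono fun x hx => le_of_lt (b := v x) (hKv hx)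
    _ ≤ (∫⁻ x, v x ∂μ) / n := meas_ge_le_lintegral_div hv.aemeasurable (Nat.cast_ne_zero.2 hn)
        (natCast_ne_top n)
    _ ≤ B / n := by gcongr; exact hS μ hμ
    _ ≤ ε := hBn

section Truncation

variable {X : Type*} [MeasurableSpace X] {f g : X → ℝ} {c C : ℝ}

theorem lintegral_ofReal_le_lintegral_min_add (hf : Measurable f) (hc : 0 ≤ c)
    (hfg : ∀ x, f x ≤ c * g x + C) {N : ℝ} (hN : C ≤ N) (ν : Measure X) :
    ∫⁻ x, ENNReal.ofReal (f x) ∂ν ≤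
      ∫⁻ x, ENNReal.ofReal (min (f x) N) ∂ν + ENNReal.ofReal c * ∫⁻ x, ENNReal.ofReal (g x) ∂ν := by
  have hpt : ∀ x, ENNReal.ofReal (f x) ≤
      ENNReal.ofReal (min (f x) N) + ENNReal.ofReal c * ENNReal.ofReal (g x) := by
    intro x
    rw [← ENNReal.ofReal_mul hc]
    rcases le_total (f x) N with h | h
    · rw [min_eq_left h]; exact le_self_add
    · rw [min_eq_right h]
      exact (ENNReal.ofReal_le_ofReal (by linarith [hfg x])).trans ENNReal.ofReal_add_le
  calc ∫⁻ x, ENNReal.ofReal (f x) ∂ν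
      ≤ ∫⁻ x, (ENNReal.ofReal (min (f x) N) + ENNReal.ofReal c * ENNReal.ofReal (g x)) ∂ν :=
        lintegral_mono hpt
    _ = _ := by
        rw [lintegral_add_left (hf.min measurable_const).ennreal_ofReal,
          lintegral_const_mul' _ _ ENNReal.ofReal_ne_top]

theorem lintegral_ofReal_ne_top_of_le_mul_add (hf : Measurable f) (hc : 0 ≤ c)
    (hfg : ∀ x, f x ≤ c * g x + C) {ν : Measure X} [IsFiniteMeasure ν]
    (hg : ∫⁻ x, ENNReal.ofReal (g x) ∂ν ≠ ∞) : ∫⁻ x, ENNReal.ofReal (f x) ∂ν ≠ ∞ := by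
  refine ne_top_of_le_ne_top ?_ (lintegral_ofReal_le_lintegral_min_add hf hc hfg le_rfl ν)
  have hmin : ∫⁻ x, ENNReal.ofReal (min (f x) C) ∂ν ≤ ENNReal.ofReal C * ν Set.univ := by
    rw [← lintegral_const]
    exact lintegral_mono fun x => ENNReal.ofReal_le_ofReal (min_le_right _ _)
  exact ENNReal.add_ne_top.2 ⟨ne_top_of_le_ne_top (by finiteness) hmin, by finiteness⟩

end Truncation

namespace MeasureTheory.ProbabilityMeasure

variable {X : Type*} [TopologicalSpace X] [MeasurableSpace X] [OpensMeasurableSpace X]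
  [HasOuterApproxClosed X] {μs : ℕ → ProbabilityMeasure X} {μ : ProbabilityMeasure X}
  {f : X → ℝ}

theorem lintegral_ofReal_le_liminf_of_tendsto (hμ : Tendsto μs atTop (𝓝 μ))
    (hf : Continuous f) (hf0 : 0 ≤ f) :
    ∫⁻ x, ENNReal.ofReal (f x) ∂μ ≤ liminf (fun n => ∫⁻ x, ENNReal.ofReal (f x) ∂μs n) atTop :=
  lintegral_le_liminf_lintegral_of_forall_isOpen_measure_le_liminf_measure hf hf0
    fun _ hG => le_liminf_measure_open_of_tendsto hμ hG

theorem tendsto_lintegral_ofReal_of_le_mul_add (hμ : Tendsto μs atTop (𝓝 μ))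
    (hf : Continuous f) (hf0 : 0 ≤ f) {g : X → ℝ} {B : ℝ≥0∞} (hB : B ≠ ∞)
    (hgB : ∀ n, ∫⁻ x, ENNReal.ofReal (g x) ∂μs n ≤ B)
    (hfg : ∀ c > 0, ∃ C, ∀ x, f x ≤ c * g x + C) :
    Tendsto (fun n => ∫⁻ x, ENNReal.ofReal (f x) ∂μs n) atTop
      (𝓝 (∫⁻ x, ENNReal.ofReal (f x) ∂μ)) := by
  refine tendsto_of_le_liminf_of_limsup_le (lintegral_ofReal_le_liminf_of_tendsto hμ hf hf0) ?_
  have hlimsup : ∀ c > 0, limsup (fun n => ∫⁻ x, ENNReal.ofReal (f x) ∂μs n) atTop ≤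
      ∫⁻ x, ENNReal.ofReal (f x) ∂μ + ENNReal.ofReal c * B := by
    intro c hc
    obtain ⟨C, hC⟩ := hfg c hc
    set N := max C 0
    let h : BoundedContinuousFunction X ℝ :=
      .ofNormedAddCommGroup (fun x => min (f x) N) (hf.min continuous_const) N fun x => by
        rw [Real.norm_of_nonneg (le_min (hf0 x) (le_max_right _ _))]
        exact min_le_right _ _
    have htrunc := tendsto_iff_forall_lintegral_tendsto.1 hμ h.nnrealPart
    calc limsup (fun n => ∫⁻ x, ENNReal.ofReal (f x) ∂μs n) atTop
        ≤ limsup (fun n => ∫⁻ x, ENNReal.ofReal (min (f x) N) ∂μs n + ENNReal.ofReal c * B)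
            atTop := by
          refine limsup_le_limsup (Eventually.of_forall fun n => ?_)
          exact (lintegral_ofReal_le_lintegral_min_add hf.measurable hc.le hC
            (le_max_left C 0) _).trans (add_le_add le_rfl (mul_le_mul_right (hgB n) _))
      _ = ∫⁻ x, ENNReal.ofReal (min (f x) N) ∂μ + ENNReal.ofReal c * B :=
          (htrunc.add_const _).limsup_eq
      _ ≤ ∫⁻ x, ENNReal.ofReal (f x) ∂μ + ENNReal.ofReal c * B := by
          gcongr with x
          exact min_le_left _ _
  have hlim : Tendsto (fun c => ∫⁻ x, ENNReal.ofReal (f x) ∂μ + ENNReal.ofReal c * B) (𝓝[>] 0)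
      (𝓝 (∫⁻ x, ENNReal.ofReal (f x) ∂μ)) := by
    have hc : Tendsto (fun c => ENNReal.ofReal c * B) (𝓝[>] 0) (𝓝 0) := by
      simpa using ENNReal.Tendsto.mul_const (ENNReal.tendsto_ofReal
        (tendsto_nhdsWithin_of_tendsto_nhds (tendsto_id (x := 𝓝 (0 : ℝ))))) (Or.inr hB)
    simpa using hc.const_add (∫⁻ x, ENNReal.ofReal (f x) ∂μ)
  exact ge_of_tendsto hlim (eventually_nhdsWithin_of_forall hlimsup)

end MeasureTheory.ProbabilityMeasure

theorem stmt10_general (V₁ V₂ : ℝ → ℝ) (hV₁ : IsOrlicz V₁) (hV₂ : IsOrlicz V₂)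
    (hgrow : Tendsto (fun x : ℝ => V₁ x / V₂ x) (atTop ⊔ atBot) atTop)
    (M : ℝ)
    (μs : ℕ → ProbabilityMeasure ℝ)
    (hμs : ∀ n, mV V₁ (μs n : Measure ℝ) ≤ ENNReal.ofReal M) :
    ∃ (φ : ℕ → ℕ) (μ : ProbabilityMeasure ℝ), StrictMono φ ∧
      mV V₁ (μ : Measure ℝ) ≤ ENNReal.ofReal M ∧
      mV V₂ (μ : Measure ℝ) ≠ ⊤ ∧
      Tendsto (fun k => μs (φ k)) atTop (nhds μ) ∧
      Tendsto (fun k => (mV V₂ (μs (φ k) : Measure ℝ)).toReal) atTop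
        (nhds ((mV V₂ (μ : Measure ℝ)).toReal)) := by
  have htight : IsTightMeasureSet {((ν : ProbabilityMeasure ℝ) : Measure ℝ) | ν ∈ Set.range μs} :=
    isTightMeasureSet_of_lintegral_le hV₁.continuous.measurable.ennreal_ofReal
      (ENNReal.tendsto_ofReal_atTop.comp hV₁.tendsto_cocompact_atTop) ENNReal.ofReal_ne_top
      (by rintro _ ⟨_, ⟨n, rfl⟩, rfl⟩; exact hμs n)
  obtain ⟨μ, -, φ, hφ, hconv⟩ := (isCompact_closure_of_isTightMeasureSet htight).tendsto_subseq
    fun n => subset_closure ⟨n, rfl⟩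
  have hV₁μ : mV V₁ μ ≤ ENNReal.ofReal M :=
    (ProbabilityMeasure.lintegral_ofReal_le_liminf_of_tendsto hconv hV₁.continuous
      hV₁.nonneg).trans (liminf_le_of_frequently_le' (Frequently.of_forall fun k => hμs (φ k)))
  have hdom : ∀ c > 0, ∃ C, ∀ x, V₂ x ≤ c * V₁ x + C := fun c hc =>
    exists_le_mul_add_of_tendsto_div hV₂.continuous hV₂.nonneg hV₁.nonneg
      (by rwa [cocompact_eq_atBot_atTop, sup_comm]) hc
  have hV₂μ : mV V₂ μ ≠ ⊤ := by
    obtain ⟨C, hC⟩ := hdom 1 one_pos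
    exact lintegral_ofReal_ne_top_of_le_mul_add hV₂.continuous.measurable zero_le_one hC
      (ne_top_of_le_ne_top ENNReal.ofReal_ne_top hV₁μ)
  refine ⟨φ, μ, hφ, hV₁μ, hV₂μ, hconv, (ENNReal.tendsto_toReal hV₂μ).comp ?_⟩
  exact ProbabilityMeasure.tendsto_lintegral_ofReal_of_le_mul_add hconv hV₂.continuous
    hV₂.nonneg ENNReal.ofReal_ne_top (fun k => hμs (φ k)) hdom

/-- If `V₁/V₂ → ∞`, then `{ν : m_{V₁}(ν) ≤ M}` is sequentially compact for the
topology of weak convergence together with convergence of `V₂`-moments (the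
`d_{V₂}`-topology). -/
theorem stmt10 (V₁ V₂ : ℝ → ℝ) (hV₁ : IsOrlicz V₁) (hV₂ : IsOrlicz V₂)
    (hgrow : Tendsto (fun x : ℝ => V₁ x / V₂ x) (atTop ⊔ atBot) atTop)
    (M : ℝ) (hM : 0 < M)
    (μs : ℕ → ProbabilityMeasure ℝ)
    (hμs : ∀ n, mV V₁ (μs n : Measure ℝ) ≤ ENNReal.ofReal M) :
    ∃ (φ : ℕ → ℕ) (μ : ProbabilityMeasure ℝ), StrictMono φ ∧
      mV V₁ (μ : Measure ℝ) ≤ ENNReal.ofReal M ∧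
      mV V₂ (μ : Measure ℝ) ≠ ⊤ ∧
      Tendsto (fun k => μs (φ k)) atTop (nhds μ) ∧
      Tendsto (fun k => (mV V₂ (μs (φ k) : Measure ℝ)).toReal) atTop
        (nhds ((mV V₂ (μ : Measure ℝ)).toReal)) :=
  stmt10_general V₁ V₂ hV₁ hV₂ hgrow M μs hμs
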